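/- arXiv:1404.3916 — 5 statements merged into one kernel-verified Lean document; each statement's English description precedes it below -/
import Mathlib

section
/- Let G be a compact topological group acting continuously by ring automorphisms on a commutative ring A endowed with the discrete topology. Let R be an integral domain and let σ, τ : A → R be ring homomorphisms whose restrictions to the fixed subring A^G coincide. Then there exists g ∈ G such that τ = σ ∘ g (i.e. τ(a) = σ(g • a) for all a ∈ A). -/
/-!
Every orbit of `G` on the discrete ring `A` is finite, being a compact subset. If `z` has finite
orbit `O`, the polynomial `∏_{w ∈ O} (X - w)` has `G`-invariant coefficients, so `σ` and `τ` map it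
to the same polynomial; `τ z` is a root of its image, and as `R` is a domain, `τ z = σ (g • z)` for
some `g`. Applied to `∑ aᵢ Xⁱ ∈ A[X]` this yields a common `g` for finitely many `aᵢ`, and since
the sets `{g | τ a = σ (g • a)}` are closed, compactness of `G` gives a `g` that works for all `a`.
-/

open Polynomial MulAction

theorem exists_eq_of_map_prod_X_sub_C_eq {B S : Type*} [CommRing B] [CommRing S] [IsDomain S]
    (φ ψ : B →+* S) {s : Finset B} {z : B} (hz : z ∈ s)
    (hmap : (∏ w ∈ s, (X - C w)).map φ = (∏ w ∈ s, (X - C w)).map ψ) :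
    ∃ w ∈ s, ψ z = φ w := by
  have hroot : ((∏ w ∈ s, (X - C w)).map φ).eval (ψ z) = 0 := by
    rw [hmap, eval_map, eval₂_at_apply, eval_prod, Finset.prod_eq_zero hz (by simp), map_zero]
  simpa [Polynomial.map_prod, eval_prod, Finset.prod_eq_zero_iff, sub_eq_zero] using hroot

section Action

variable {G B : Type*} [Group G] [CommRing B] [MulSemiringAction G B]

theorem smul_prod_X_sub_C_orbit {z : B} (hz : (orbit G z).Finite) (g : G) :
    g • ∏ w ∈ hz.toFinset, (X - C w) = ∏ w ∈ hz.toFinset, (X - C w) := by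
  rw [Finset.smul_prod']
  refine Finset.prod_nbij' (g • ·) (g⁻¹ • ·) ?_ ?_ ?_ ?_ ?_ <;> simp only [hz.mem_toFinset]
  · exact fun w hw => mem_orbit_of_mem_orbit g hw
  · exact fun w hw => mem_orbit_of_mem_orbit g⁻¹ hw
  all_goals simp [smul_sub]

theorem map_eq_map_of_smul_eq {S : Type*} [CommRing S] {φ ψ : B →+* S}
    (hfix : ∀ b : B, (∀ g : G, g • b = b) → φ b = ψ b) {p : B[X]} (hp : ∀ g : G, g • p = p) :
    p.map φ = p.map ψ := by
  ext n
  simp only [coeff_map]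
  exact hfix _ fun g => by rw [← coeff_smul, hp g]

theorem exists_smul_eq_of_finite_orbit {S : Type*} [CommRing S] [IsDomain S] (φ ψ : B →+* S)
    (hfix : ∀ b : B, (∀ g : G, g • b = b) → φ b = ψ b) {z : B} (hz : (orbit G z).Finite) :
    ∃ g : G, ψ z = φ (g • z) := by
  obtain ⟨w, hw, hzw⟩ := exists_eq_of_map_prod_X_sub_C_eq φ ψ (hz.mem_toFinset.2 (mem_orbit_self z))
    (map_eq_map_of_smul_eq hfix (smul_prod_X_sub_C_orbit hz))
  obtain ⟨g, rfl⟩ := hz.mem_toFinset.1 hw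
  exact ⟨g, hzw⟩

end Action

theorem finite_orbit_of_compactSpace {G X : Type*} [Monoid G] [TopologicalSpace G] [CompactSpace G]
    [TopologicalSpace X] [DiscreteTopology X] [MulAction G X] [ContinuousSMul G X] (x : X) :
    (orbit G x).Finite :=
  (isCompact_range (continuous_id.smul continuous_const)).finite_of_discrete

theorem exists_smul_forall_eq_of_finite_orbit {G A R ι : Type*} [Group G] [CommRing A]
    [MulSemiringAction G A] [CommRing R] [IsDomain R] [Fintype ι] (σ τ : A →+* R)
    (h : ∀ a : A, (∀ g : G, g • a = a) → σ a = τ a) (a : ι → A) (ha : (orbit G a).Finite) :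
    ∃ g : G, ∀ i, τ (a i) = σ (g • a i) := by
  let e := Fintype.equivFin ι
  let enc : (ι → A) → A[X] := fun b => ∑ i, monomial (e i) (b i)
  have coeff_enc : ∀ b i, (enc b).coeff (e i) = b i := by
    intro b i
    have he : ∀ j, (e j : ℕ) = e i ↔ j = i := fun j => Fin.val_inj.trans e.apply_eq_iff_eq
    classical
    simp [enc, finsetSum_coeff, coeff_monomial, he]
  have enc_smul : ∀ (g : G) b, g • enc b = enc (g • b) := by
    intro g b
    simp [enc, Finset.smul_sum, smul_monomial]
  have henc : (orbit G (enc a)).Finite :=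
    (ha.image enc).subset <| by
      rintro _ ⟨g, rfl⟩
      exact ⟨g • a, mem_orbit _ g, (enc_smul g a).symm⟩
  obtain ⟨g, hg⟩ := exists_smul_eq_of_finite_orbit (mapRingHom σ) (mapRingHom τ)
    (fun _ => map_eq_map_of_smul_eq h) henc
  refine ⟨g, fun i => ?_⟩
  simpa [coeff_enc, enc_smul] using congrArg (coeff · (e i)) hg

theorem stmt_0_general {G A R : Type*} [Group G] [TopologicalSpace G]
    [CompactSpace G] [CommRing A] [TopologicalSpace A] [DiscreteTopology A]
    [MulSemiringAction G A] [ContinuousSMul G A]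
    [CommRing R] [IsDomain R] (σ τ : A →+* R)
    (h : ∀ a : A, (∀ g : G, g • a = a) → σ a = τ a) :
    ∃ g : G, ∀ a : A, τ a = σ (g • a) := by
  have hclosed : ∀ a : A, IsClosed {g : G | τ a = σ (g • a)} := fun a =>
    (isClosed_discrete {b | τ a = σ b}).preimage (continuous_id.smul continuous_const)
  have hfinite : ∀ t : Finset A, (Set.univ ∩ ⋂ a ∈ t, {g : G | τ a = σ (g • a)}).Nonempty := by
    intro t
    obtain ⟨g, hg⟩ := exists_smul_forall_eq_of_finite_orbit σ τ h (fun a : t => (a : A))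
      (finite_orbit_of_compactSpace _)
    exact ⟨g, trivial, Set.mem_iInter₂.2 fun a ha => hg ⟨a, ha⟩⟩
  obtain ⟨g, -, hg⟩ := isCompact_univ.inter_iInter_nonempty _ hclosed hfinite
  exact ⟨g, Set.mem_iInter.1 hg⟩

/-- **Tate's lemma.** Let `G` be a compact topological group acting continuously by ring
automorphisms on a commutative ring `A` endowed with the discrete topology. If `σ τ : A →+* R`
are ring homomorphisms into a domain `R` that agree on the fixed subring `A^G`, then there is
`g ∈ G` with `τ = σ ∘ g`. -/
theorem stmt_0 {G A R : Type*} [Group G] [TopologicalSpace G] [IsTopologicalGroup G]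
    [CompactSpace G] [CommRing A] [TopologicalSpace A] [DiscreteTopology A]
    [MulSemiringAction G A] [ContinuousSMul G A]
    [CommRing R] [IsDomain R] (σ τ : A →+* R)
    (h : ∀ a : A, (∀ g : G, g • a = a) → σ a = τ a) :
    ∃ g : G, ∀ a : A, τ a = σ (g • a) :=
  stmt_0_general σ τ h
end

section
/- Let G be a compact topological group acting continuously by ring automorphisms on a commutative ring A endowed with the discrete topology, and let 𝔭 be a prime ideal of the fixed subring A^G. Then G acts transitively on the set of prime ideals of A lying over 𝔭: for any two primes 𝔮, 𝔮' of A with 𝔮 ∩ A^G = 𝔮' ∩ A^G = 𝔭 there exists g ∈ G with g • 𝔮' = 𝔮. -/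
/-!
For an open normal subgroup `N` of the compact group `G`, the finite group `G ⧸ N` acts on the
fixed ring `A^N` with invariants `A^G`, so the classical finite case yields some `g` such that
`𝔮` and `g • 𝔮'` meet `A^N` in the same ideal. The set of such `g` is closed, and these sets
form a downward directed family of nonempty closed subsets of `G`. By compactness they have a
common point, and it works on all of `A` because every element of `A` is fixed by some open
normal subgroup.
-/

open scoped Pointwise

theorem exists_openNormalSubgroup_le_stabilizer {G X : Type*} [Group G] [TopologicalSpace G]
    [IsTopologicalGroup G] [CompactSpace G] [MulAction G X] [TopologicalSpace X]
    [DiscreteTopology X] [ContinuousSMul G X] (x : X) :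
    ∃ N : OpenNormalSubgroup G, (N : Subgroup G) ≤ MulAction.stabilizer G x :=
  have hopen := stabilizer_isOpen G x
  IsTopologicalGroup.exist_openNormalSubgroup_sub_clopen_nhds_of_one
    ⟨Subgroup.isClosed_of_isOpen _ hopen, hopen⟩ (one_mem _)

instance FixedPoints.isInvariant_subring {A G : Type*} [CommRing A] [Group G]
    [MulSemiringAction G A] : Algebra.IsInvariant (FixedPoints.subring A G) A G where
  isInvariant a ha := ⟨⟨a, ha⟩, rfl⟩

namespace Algebra.IsInvariant

variable {A B G : Type*} [CommRing A] [CommRing B] [Algebra A B] [Group G]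
  [MulSemiringAction G B] [SMulCommClass G A B] [Algebra.IsInvariant A B G]

theorem exists_smul_eq_on_fixedPoints_of_under_eq (N : Subgroup G) [N.Normal] [Finite (G ⧸ N)]
    (P Q : Ideal B) [P.IsPrime] [Q.IsPrime] (hPQ : P.under A = Q.under A) :
    ∃ g : G, ∀ x ∈ FixedPoints.subalgebra A B N, x ∈ Q ↔ x ∈ g • P := by
  obtain ⟨g, hg⟩ := exists_smul_of_under_eq A (FixedPoints.subalgebra A B N) (G ⧸ N)
    (P.under _) (Q.under _) hPQ
  obtain ⟨g, rfl⟩ := QuotientGroup.mk_surjective g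
  refine ⟨g, fun x hx => ?_⟩
  have hx := congr((⟨x, hx⟩ : FixedPoints.subalgebra A B N) ∈ $hg)
  rw [Ideal.mem_pointwise_smul_iff_inv_smul_mem] at hx ⊢
  exact hx.to_iff

theorem exists_smul_of_under_eq_of_compactSpace [TopologicalSpace G] [IsTopologicalGroup G]
    [CompactSpace G] [TopologicalSpace B] [DiscreteTopology B] [ContinuousSMul G B]
    (P Q : Ideal B) [P.IsPrime] [Q.IsPrime] (hPQ : P.under A = Q.under A) :
    ∃ g : G, Q = g • P := by
  let Z (N : OpenNormalSubgroup G) : Set G :=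
    {g | ∀ x ∈ FixedPoints.subalgebra A B (N : Subgroup G), x ∈ Q ↔ x ∈ g • P}
  have hZ_closed (N) : IsClosed (Z N) := by
    simp only [Z, Ideal.mem_pointwise_smul_iff_inv_smul_mem, Set.ofPred_forall]
    exact isClosed_biInter fun x _ =>
      (isClosed_discrete {b | x ∈ Q ↔ b ∈ P}).preimage (continuous_inv.smul continuous_const)
  have hZ_mono : Monotone Z := fun N N' hNN' g hg x hx =>
    hg x fun n => hx ⟨n, hNN' n.2⟩
  have : Nonempty (OpenNormalSubgroup G) := ⟨⟨⊤, ⟨fun _ _ _ => trivial⟩⟩⟩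
  obtain ⟨g, hg⟩ := IsCompact.nonempty_iInter_of_directed_nonempty_isCompact_isClosed Z
    hZ_mono.directed_ge (fun N => exists_smul_eq_on_fixedPoints_of_under_eq _ P Q hPQ)
    (fun N => (hZ_closed N).isCompact) hZ_closed
  refine ⟨g, Ideal.ext fun x => ?_⟩
  obtain ⟨N, hN⟩ := exists_openNormalSubgroup_le_stabilizer (G := G) x
  exact Set.mem_iInter.mp hg N x fun n => hN n.2

end Algebra.IsInvariant

/-- Let `G` be a compact topological group acting continuously by ring automorphisms on a
commutative ring `A` with the discrete topology. Then `G` acts transitively on the set of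
prime ideals of `A` lying over a given prime `𝔭` of the fixed subring `A^G`: if `𝔮, 𝔮'` are
primes of `A` whose intersections with `A^G` coincide, then `g • 𝔮' = 𝔮` for some `g ∈ G`. -/
theorem stmt_1 {G A : Type*} [Group G] [TopologicalSpace G] [IsTopologicalGroup G]
    [CompactSpace G] [CommRing A] [TopologicalSpace A] [DiscreteTopology A]
    [MulSemiringAction G A] [ContinuousSMul G A]
    (𝔮 𝔮' : Ideal A) [𝔮.IsPrime] [𝔮'.IsPrime]
    (h : ∀ a : A, (∀ g : G, g • a = a) → (a ∈ 𝔮 ↔ a ∈ 𝔮')) :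
    ∃ g : G, ∀ a : A, a ∈ 𝔮' ↔ g • a ∈ 𝔮 := by
  have h_under : 𝔮'.under (FixedPoints.subring A G) = 𝔮.under (FixedPoints.subring A G) :=
    Ideal.ext fun a => (h a a.2).symm
  obtain ⟨g, hg⟩ :=
    Algebra.IsInvariant.exists_smul_of_under_eq_of_compactSpace (G := G) 𝔮' 𝔮 h_under
  exact ⟨g, fun a => by rw [hg, Ideal.smul_mem_pointwise_smul_iff]⟩
end

section
/- Let (K, v) be a valued field and let L/K be an algebraic field extension. Let R be the integral closure of the valuation ring 𝒪_v in L. Then the map sending a maximal ideal 𝔪 of R to the localization R_𝔪 (viewed as a subring of L) is a bijection from the set of maximal ideals of R onto the set of valuation subrings of L extending 𝒪_v; its inverse sends a valuation subring 𝒪 of L with maximal ideal 𝔪_𝒪 to 𝔪_𝒪 ∩ R. -/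
/-!
Every valuation subring `w` of `L` containing `v` contains the integral closure `R`, since
valuation rings are integrally closed, and `R` is the intersection of all of them. The center
`𝔪_w ∩ R` contracts to the maximal ideal of `v` exactly when `w ∩ K = v`, so it is then maximal
because `R` is integral over `v`; conversely, a valuation subring dominating `R_𝔪` has center `𝔪`
and lies over `v`. Injectivity comes from recovering `w` as `R_{𝔪_w ∩ R}`: for `z ∈ w`, normalize
an algebraic relation `∑ aᵢ zⁱ = 0` over `v` so that some `aᵢ = 1`, and let `k` be the last index
with `w(aₖ) = 1`. Then `c = ∑_{i ≥ k} aᵢ z^{i-k}` has `w(c) = 1`, and `c` and `zc` lie in every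
valuation subring containing `v` (expand in `z`, or by the relation in `z⁻¹`), hence in `R`.
-/

/-- For a field extension `L/K` and a valuation subring `v` of `K`, the algebra structure of
`L` over the valuation ring `𝒪_v`, via the inclusion `𝒪_v ⊆ K ⊆ L`. -/
noncomputable instance valAlgebra {K L : Type*} [Field K] [Field L] [Algebra K L]
    (v : ValuationSubring K) : Algebra v L :=
  ((algebraMap K L).comp v.subtype).toAlgebra

open Finset Polynomial IsLocalRing

theorem sum_range_add_eq_neg_sum_inv_pow {F : Type*} [Field F] {z : F} (hz : z ≠ 0)
    {a : ℕ → F} {k m : ℕ} (h : ∑ i ∈ range (k + m), a i * z ^ i = 0) :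
    ∑ i ∈ range m, a (k + i) * z ^ i = -∑ i ∈ range k, a i * z⁻¹ ^ (k - i) := by
  have hlow : z ^ k * ∑ i ∈ range k, a i * z⁻¹ ^ (k - i) = ∑ i ∈ range k, a i * z ^ i := by
    rw [mul_sum]
    refine sum_congr rfl fun i hi => ?_
    rw [← Nat.add_sub_cancel' (mem_range.mp hi).le, pow_add, inv_pow, Nat.add_sub_cancel_left]
    field_simp
  have hhigh : z ^ k * ∑ i ∈ range m, a (k + i) * z ^ i =
      ∑ i ∈ range m, a (k + i) * z ^ (k + i) := by
    rw [mul_sum]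
    exact sum_congr rfl fun i _ => by ring
  apply mul_left_cancel₀ (pow_ne_zero k hz)
  rw [mul_neg, hlow, hhigh, eq_neg_iff_add_eq_zero, add_comm, ← h, sum_range_add]

theorem sum_range_add_mem_of_sum_eq_zero {F : Type*} [Field F] (A : ValuationSubring F)
    {a : ℕ → F} (ha : ∀ i, a i ∈ A) {z : F} {k m : ℕ}
    (h : ∑ i ∈ range (k + m), a i * z ^ i = 0) :
    ∑ i ∈ range m, a (k + i) * z ^ i ∈ A ∧ z * ∑ i ∈ range m, a (k + i) * z ^ i ∈ A := by
  by_cases hz : z ∈ A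
  · have hsum : ∑ i ∈ range m, a (k + i) * z ^ i ∈ A :=
      sum_mem fun i _ => mul_mem (ha _) (pow_mem hz _)
    exact ⟨hsum, mul_mem hz hsum⟩
  have hz0 : z ≠ 0 := fun h0 => hz (h0 ▸ A.zero_mem)
  have hzi : z⁻¹ ∈ A := (A.mem_or_inv_mem z).resolve_left hz
  rw [sum_range_add_eq_neg_sum_inv_pow hz0 h, mul_neg, mul_sum]
  refine ⟨neg_mem (sum_mem fun i _ => mul_mem (ha i) (pow_mem hzi _)),
    neg_mem (sum_mem fun i hi => ?_)⟩
  obtain ⟨e, he⟩ : ∃ e, k - i = e + 1 := ⟨k - i - 1, by have := mem_range.mp hi; omega⟩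
  rw [he, pow_succ', mul_left_comm, mul_inv_cancel_left₀ hz0]
  exact mul_mem (ha i) (pow_mem hzi e)

namespace ValuationSubring

theorem mem_comap_nonunits {K L : Type*} [Field K] [Field L] (A : ValuationSubring L)
    (f : K →+* L) {x : K} : x ∈ (A.comap f).nonunits ↔ f x ∈ A.nonunits := by
  simp only [mem_nonunits_iff_or, mem_comap, map_inv₀, map_eq_zero]

theorem exists_aeval_eq_zero_of_isAlgebraic {K L : Type*} [Field K] [Field L] [Algebra K L]
    (v : ValuationSubring K) {z : L} (hz : IsAlgebraic K z) :
    ∃ q : K[X], aeval z q = 0 ∧ (∀ i, q.coeff i ∈ v) ∧ ∃ j, q.coeff j = 1 := by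
  obtain ⟨p, hp0, hpz⟩ := hz
  obtain ⟨j, hj, hmax⟩ :=
    p.support.exists_max_image (fun i => v.valuation (p.coeff i)) (nonempty_support_iff.mpr hp0)
  have hj0 : p.coeff j ≠ 0 := mem_support_iff.mp hj
  refine ⟨C (p.coeff j)⁻¹ * p, by simp [hpz], fun i => v.mem_of_valuation_le_one _ ?_, j,
    by simp [hj0]⟩
  by_cases hi : i ∈ p.support
  · rw [coeff_C_mul, map_mul, map_inv₀,
      inv_mul_le_one₀ (zero_lt_iff.mpr (v.valuation.ne_zero_iff.mpr hj0))]
    exact hmax i hi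
  · simp [notMem_support_iff.mp hi]

variable {K L : Type*} [Field K] [Field L] [Algebra K L] {v : ValuationSubring K}
  {w : ValuationSubring L}

theorem integralClosure_le (hw : v ≤ w.comap (algebraMap K L)) :
    (integralClosure v L).toSubring ≤ w.toSubring := by
  rintro x ⟨p, hp, hpx⟩
  exact LocalSubring.mem_of_isMax_of_isIntegral w.isMax_toLocalSubring
    ⟨p.map (((algebraMap K L).comp v.subtype).codRestrict w.toSubring fun a => hw a.2),
      hp.map _, (eval₂_map _ _ _).trans hpx⟩

theorem mem_integralClosure_iff_forall {x : L} :
    x ∈ integralClosure v L ↔ ∀ w : ValuationSubring L, v ≤ w.comap (algebraMap K L) → x ∈ w := by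
  refine ⟨fun hx w hw => integralClosure_le hw hx, fun H => of_not_not fun hx => ?_⟩
  obtain ⟨w, hRw, hxw⟩ := Subring.exists_le_valuationSubring_of_isIntegrallyClosedIn
    (R := (integralClosure v L).toSubring) hx
  exact hxw (H w fun a ha => hRw ((integralClosure v L).algebraMap_mem ⟨a, ha⟩))

/-- The center `𝔪_w ∩ R` of `w` on the integral closure `R` of `v` in `L`. -/
noncomputable def centerIdeal (w : ValuationSubring L) (hw : v ≤ w.comap (algebraMap K L)) :
    Ideal (integralClosure v L) :=
  (maximalIdeal w).comap (Subring.inclusion (integralClosure_le hw))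

theorem mem_centerIdeal (hw : v ≤ w.comap (algebraMap K L)) (x : integralClosure v L) :
    x ∈ centerIdeal w hw ↔ w.valuation x < 1 :=
  w.valuation_lt_one_iff _

instance (hw : v ≤ w.comap (algebraMap K L)) : (centerIdeal w hw).IsPrime :=
  Ideal.comap_isPrime _ _

theorem comap_eq_iff_comap_centerIdeal (hw : v ≤ w.comap (algebraMap K L)) :
    w.comap (algebraMap K L) = v ↔
      (centerIdeal w hw).comap (algebraMap v (integralClosure v L)) = maximalIdeal v := by
  have halgebraMap_mem (a : v) : algebraMap v (integralClosure v L) a ∈ centerIdeal w hw ↔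
      (a : K) ∈ (w.comap (algebraMap K L)).nonunits := by
    rw [mem_centerIdeal, mem_comap_nonunits, mem_nonunits_iff]
    rfl
  constructor
  · intro h
    ext a
    rw [Ideal.mem_comap, halgebraMap_mem, h, coe_mem_nonunits_iff]
  · intro h
    refine le_antisymm (nonunits_le_nonunits.mp fun a ha => ?_) hw
    obtain ⟨_, hmax⟩ := mem_nonunits_iff_exists_mem_maximalIdeal.mp ha
    rw [← h, Ideal.mem_comap, halgebraMap_mem] at hmax
    exact hmax

theorem isMaximal_centerIdeal (hw : w.comap (algebraMap K L) = v) :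
    (centerIdeal w hw.ge).IsMaximal :=
  Ideal.isMaximal_of_isIntegral_of_isMaximal_comap _
    ((comap_eq_iff_comap_centerIdeal hw.ge).mp hw ▸ maximalIdeal.isMaximal v)

theorem exists_centerIdeal_eq (𝔪 : Ideal (integralClosure v L)) [𝔪.IsMaximal] :
    ∃ (w : ValuationSubring L) (hw : w.comap (algebraMap K L) = v), centerIdeal w hw.ge = 𝔪 := by
  obtain ⟨w, hRw, h𝔪w⟩ := Ideal.image_subset_nonunits_valuationSubring
    (A := (integralClosure v L).toSubring) 𝔪 Ideal.IsPrime.ne_top'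
  have hvw : v ≤ w.comap (algebraMap K L) :=
    fun a ha => hRw ((integralClosure v L).algebraMap_mem ⟨a, ha⟩)
  have hle : 𝔪 ≤ centerIdeal w hvw := fun x hx =>
    (mem_centerIdeal hvw x).mpr (w.mem_nonunits_iff.mp (h𝔪w ⟨x, hx, rfl⟩))
  have heq : centerIdeal w hvw = 𝔪 :=
    (Ideal.IsMaximal.eq_of_le ‹_› Ideal.IsPrime.ne_top' hle).symm
  have hw : w.comap (algebraMap K L) = v := (comap_eq_iff_comap_centerIdeal hvw).mpr <| by
    rw [heq]
    exact eq_maximalIdeal (Ideal.isMaximal_comap_of_isIntegral_of_isMaximal 𝔪)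
  exact ⟨w, hw, heq⟩

theorem exists_mul_mem_integralClosure [Algebra.IsAlgebraic K L]
    (hw : v ≤ w.comap (algebraMap K L)) {z : L} (hz : z ∈ w) :
    ∃ c ∈ integralClosure v L, w.valuation c = 1 ∧ z * c ∈ integralClosure v L := by
  obtain ⟨q, hqz, hqv, j, hj⟩ :=
    exists_aeval_eq_zero_of_isAlgebraic v (Algebra.IsAlgebraic.isAlgebraic (R := K) z)
  set a : ℕ → L := fun i => algebraMap K L (q.coeff i)
  have ha (w' : ValuationSubring L) (hw' : v ≤ w'.comap (algebraMap K L)) (i : ℕ) : a i ∈ w' :=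
    hw' (hqv i)
  set n := q.natDegree
  have hjn : j ≤ n := le_natDegree_of_ne_zero (hj ▸ one_ne_zero)
  set k := Nat.findGreatest (fun i => w.valuation (a i) = 1) n
  have hk : w.valuation (a k) = 1 :=
    Nat.findGreatest_spec (P := fun i => w.valuation (a i) = 1) hjn (by simp [a, hj])
  have hgt (i : ℕ) (hi : k < i) : w.valuation (a i) < 1 := by
    refine lt_of_le_of_ne ((w.valuation_le_one_iff _).mpr (ha w hw i)) ?_
    rcases le_or_gt i n with hin | hin
    · exact Nat.findGreatest_is_greatest hi hin
    · simp [a, coeff_eq_zero_of_natDegree_lt hin]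
  have hkn : k ≤ n := Nat.findGreatest_le n
  obtain ⟨m, hm⟩ : ∃ m, n + 1 = k + (m + 1) := ⟨n - k, by omega⟩
  have hsum : ∑ i ∈ range (k + (m + 1)), a i * z ^ i = 0 := by
    rw [← hm, ← hqz, aeval_eq_sum_range]
    simp [a, n, Algebra.smul_def]
  have hmem w' hw' := sum_range_add_mem_of_sum_eq_zero w' (ha w' hw') hsum
  refine ⟨_, mem_integralClosure_iff_forall.mpr fun w' hw' => (hmem w' hw').1, ?_,
    mem_integralClosure_iff_forall.mpr fun w' hw' => (hmem w' hw').2⟩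
  have hz1 : w.valuation z ≤ 1 := (w.valuation_le_one_iff z).mpr hz
  have htail : w.valuation (∑ i ∈ range m, a (k + (i + 1)) * z ^ (i + 1)) < 1 :=
    Valuation.map_sum_lt _ one_ne_zero fun i _ => by
      rw [map_mul, map_pow]
      exact mul_lt_one_of_lt_of_le (hgt _ (by omega)) (pow_le_one₀ zero_le hz1)
  rw [sum_range_succ', add_zero, pow_zero, mul_one,
    Valuation.map_add_eq_of_lt_right _ (hk ▸ htail), hk]

theorem coe_eq_setOf_centerIdeal [Algebra.IsAlgebraic K L] (hw : v ≤ w.comap (algebraMap K L)) :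
    (w : Set L) =
      {z : L | ∃ b c : integralClosure v L, c ∉ centerIdeal w hw ∧ z * (c : L) = (b : L)} := by
  ext z
  refine ⟨fun hz => ?_, fun ⟨b, c, hc, hzc⟩ => ?_⟩
  · obtain ⟨c, hc, hc1, hzc⟩ := exists_mul_mem_integralClosure hw hz
    exact ⟨⟨z * c, hzc⟩, ⟨c, hc⟩, by simp [mem_centerIdeal, hc1], rfl⟩
  · have hc1 : w.valuation c = 1 := le_antisymm
      ((w.valuation_le_one_iff _).mpr (integralClosure_le hw c.2))
      (not_lt.mp ((mem_centerIdeal hw c).not.mp hc))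
    refine w.mem_of_valuation_le_one z ?_
    calc w.valuation z = w.valuation b := by rw [← hzc, map_mul, hc1, mul_one]
      _ ≤ 1 := (w.valuation_le_one_iff _).mpr (integralClosure_le hw b.2)

variable (v L) in
noncomputable def centerIdealEquiv [Algebra.IsAlgebraic K L] :
    {w : ValuationSubring L // w.comap (algebraMap K L) = v} ≃
      {𝔪 : Ideal (integralClosure v L) // 𝔪.IsMaximal} :=
  Equiv.ofBijective (fun w => ⟨centerIdeal w.1 w.2.ge, isMaximal_centerIdeal w.2⟩)
    ⟨fun w₁ w₂ h => Subtype.ext <| SetLike.coe_injective <| by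
      have h' : centerIdeal w₁.1 w₁.2.ge = centerIdeal w₂.1 w₂.2.ge := congrArg Subtype.val h
      rw [coe_eq_setOf_centerIdeal w₁.2.ge, coe_eq_setOf_centerIdeal w₂.2.ge, h'],
    fun 𝔪 =>
      have := 𝔪.2
      let ⟨w, hw, h⟩ := exists_centerIdeal_eq 𝔪.1
      ⟨⟨w, hw⟩, Subtype.ext h⟩⟩

end ValuationSubring

/-- Let `(K, v)` be a valued field, `L/K` an algebraic field extension, and `R` the integral
closure of `𝒪_v` in `L`. Then `𝔪 ↦ R_𝔪` is a bijection from the maximal ideals of `R` onto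
the valuation subrings of `L` extending `v` (here `R_𝔪 = {z ∈ L | z = b/c, b, c ∈ R, c ∉ 𝔪}`),
with inverse sending a valuation subring `𝒪` to `𝔪_𝒪 ∩ R`
(note that `c ∈ 𝔪_𝒪 ↔ 𝒪.valuation c < 1`). -/
theorem stmt_5 {K L : Type*} [Field K] [Field L] [Algebra K L] [Algebra.IsAlgebraic K L]
    (v : ValuationSubring K) :
    ∃ e : {𝔪 : Ideal (integralClosure v L) // 𝔪.IsMaximal} ≃
        {w : ValuationSubring L // w.comap (algebraMap K L) = v},
      ∀ 𝔪 : {𝔪 : Ideal (integralClosure v L) // 𝔪.IsMaximal},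
        (((e 𝔪 : ValuationSubring L) : Set L) =
          {z : L | ∃ b c : integralClosure v L, c ∉ 𝔪.1 ∧ z * (c : L) = (b : L)}) ∧
        ∀ c : integralClosure v L,
          c ∈ 𝔪.1 ↔ (e 𝔪 : ValuationSubring L).valuation (c : L) < 1 := by
  refine ⟨(ValuationSubring.centerIdealEquiv L v).symm, fun 𝔪 => ?_⟩
  obtain ⟨w, rfl⟩ := (ValuationSubring.centerIdealEquiv L v).surjective 𝔪
  rw [Equiv.symm_apply_apply]
  exact ⟨ValuationSubring.coe_eq_setOf_centerIdeal w.2.ge, ValuationSubring.mem_centerIdeal w.2.ge⟩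
end

section
/- Let (K, v) be a valued field and let L/K be a finite normal extension of degree n. Assume 𝒪_x is the unique valuation subring of L extending 𝒪_v. Then for every a ∈ L^* one has x(a)^n = x(N_{L/K}(a)) in the value group of x, where N_{L/K}(a) ∈ K^* is the field norm; consequently n·Δ_x ⊆ Δ_v, i.e. for every a ∈ L^* there exists b ∈ K^* with a^n·b^{-1} ∈ 𝒪_x^×. -/
/-!
Every `K`-automorphism `σ` of `L` maps `𝒪_x` to an extension of `𝒪_v`, hence to `𝒪_x` itself by
uniqueness, so `σ` induces an order automorphism of the value group. Since `σ` has finite order,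
that automorphism is the identity: all conjugates of `a` have the value `x(a)`. The norm of `a` is
a product of `n` conjugates (with multiplicity), hence `x(N(a)) = x(a)^n`, and `b = N(a)` works.
-/

open Polynomial IntermediateField Module

namespace Valuation

variable {R Γ₀ G : Type*} [Ring R] [LinearOrderedCommMonoidWithZero Γ₀] [Monoid G]
  [MulSemiringAction G R] {v : Valuation R Γ₀}

/-- The sequence `k ↦ v (g ^ k • r)` is periodic, and strictly monotone unless
`v (g • r) = v r`. -/
theorem map_smul_eq_of_isOfFinOrder {g : G} (hg : IsOfFinOrder g)
    (hv : (v.comap (MulSemiringAction.toRingHom G R g)).IsEquiv v) (r : R) :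
    v (g • r) = v r := by
  have hpow : ∀ (k : ℕ) (a b : R), v (g ^ k • a) < v (g ^ k • b) ↔ v a < v b := by
    intro k
    induction k with
    | zero => simp
    | succ k ih =>
      intro a b
      rw [pow_succ', mul_smul, mul_smul]
      exact hv.lt_iff_lt.trans (ih a b)
  set f : ℕ → Γ₀ := fun k ↦ v (g ^ k • r) with hf
  have hdesc (k : ℕ) : f (k + 1) < f k ↔ v (g • r) < v r := by
    simp only [hf, pow_succ, mul_smul, hpow]
  have hasc (k : ℕ) : f k < f (k + 1) ↔ v r < v (g • r) := by
    simp only [hf, pow_succ, mul_smul, hpow]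
  have hperiod : f (orderOf g) = f 0 := by simp [hf, pow_orderOf_eq_one]
  have hn := hg.orderOf_pos
  rcases lt_trichotomy (v (g • r)) (v r) with hlt | heq | hgt
  · have := strictAnti_nat_of_succ_lt (fun k ↦ (hdesc k).2 hlt) hn
    exact absurd hperiod this.ne
  · exact heq
  · have := strictMono_nat_of_lt_succ (fun k ↦ (hasc k).2 hgt) hn
    exact absurd hperiod this.ne'

end Valuation

namespace ValuationSubring

theorem valuation_comap_isEquiv {L : Type*} [Field L] (A : ValuationSubring L) {f : L →+* L}
    (hf : A.comap f = A) : (A.valuation.comap f).IsEquiv A.valuation :=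
  Valuation.isEquiv_of_val_le_one fun r ↦ by
    rw [Valuation.comap_apply, valuation_le_one_iff, valuation_le_one_iff, ← mem_comap, hf]

variable {K L : Type*} [Field K] [Field L] [Algebra K L] {v : ValuationSubring K}
  {x : ValuationSubring L}

theorem valuation_algEquiv_apply_of_unique [FiniteDimensional K L]
    (hx : x.comap (algebraMap K L) = v)
    (huniq : ∀ y : ValuationSubring L, y.comap (algebraMap K L) = v → y = x)
    (σ : L ≃ₐ[K] L) (z : L) : x.valuation (σ z) = x.valuation z := by
  refine x.valuation.map_smul_eq_of_isOfFinOrder (isOfFinOrder_of_finite σ)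
    (x.valuation_comap_isEquiv (huniq _ ?_)) z
  rw [comap_comap, ← hx]
  congr 1
  exact RingHom.ext σ.commutes

end ValuationSubring

namespace Algebra

variable {K L M F : Type*} [Field K] [Field L] [Algebra K L] [FiniteDimensional K L]
  [CommMonoid M] [FunLike F L M] [MonoidHomClass F L M]

theorem map_algebraMap_norm_eq_pow_finrank (f : F) {a : L}
    (hsplit : ((minpoly K a).map (algebraMap K L)).Splits)
    (hroots : ∀ r ∈ (minpoly K a).aroots L, f r = f a) :
    f (algebraMap K L (norm K a)) = f a ^ finrank K L := by
  rw [norm_eq_prod_roots L hsplit, map_pow, map_multiset_prod, Multiset.map_congr rfl hroots,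
    Multiset.map_const', Multiset.prod_replicate, ← pow_mul, aroots,
    ← hsplit.natDegree_eq_card_roots, natDegree_map, ← adjoin.finrank (.of_finite K a),
    finrank_mul_finrank]

theorem map_algebraMap_norm_eq_pow_finrank_of_normal [Normal K L] (f : F)
    (hf : ∀ (σ : L ≃ₐ[K] L) (z : L), f (σ z) = f z) (a : L) :
    f (algebraMap K L (norm K a)) = f a ^ finrank K L := by
  refine map_algebraMap_norm_eq_pow_finrank f (Normal.splits ‹_› a) fun r hr ↦ ?_
  obtain ⟨σ, rfl⟩ :=
    minpoly.exists_algEquiv_of_root' (Algebra.IsAlgebraic.isAlgebraic a) (mem_aroots'.1 hr).2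
  exact hf σ a

end Algebra

/-- Let `(K, v)` be a valued field and `L` a finite normal extension of `K` of degree `n`,
and assume `x` is the unique extension of `v` to `L`. Then for all `a ∈ L^*` one has
`x(a)^n = x(N_{L/K}(a))` in the value group of `x`; consequently `n·Δ_x ⊆ Δ_v`, i.e. for
every `a ∈ L^*` there is `b ∈ K^*` with `a^n / b ∈ 𝒪_x^×`. -/
theorem stmt_10 {K L : Type*} [Field K] [Field L] [Algebra K L] [Normal K L]
    [FiniteDimensional K L] (v : ValuationSubring K) (x : ValuationSubring L)
    (hx : x.comap (algebraMap K L) = v)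
    (huniq : ∀ y : ValuationSubring L, y.comap (algebraMap K L) = v → y = x) :
    (∀ a : L, a ≠ 0 →
      x.valuation a ^ Module.finrank K L =
        x.valuation (algebraMap K L (Algebra.norm K a))) ∧
    ∀ a : L, a ≠ 0 → ∃ b : K, b ≠ 0 ∧
      a ^ Module.finrank K L / algebraMap K L b ∈ x ∧
      (a ^ Module.finrank K L / algebraMap K L b)⁻¹ ∈ x := by
  have hnorm (a : L) :
      x.valuation (algebraMap K L (Algebra.norm K a)) = x.valuation a ^ finrank K L :=
    Algebra.map_algebraMap_norm_eq_pow_finrank_of_normal x.valuation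
      (ValuationSubring.valuation_algEquiv_apply_of_unique hx huniq) a
  refine ⟨fun a _ ↦ (hnorm a).symm, fun a ha ↦ ⟨Algebra.norm K a, Algebra.norm_ne_zero_iff.2 ha, ?_⟩⟩
  have hunit : x.valuation (a ^ finrank K L / algebraMap K L (Algebra.norm K a)) = 1 := by
    rw [map_div₀, map_pow, hnorm, div_self (pow_ne_zero _ ((Valuation.ne_zero_iff _).2 ha))]
  rw [← ValuationSubring.valuation_le_one_iff, ← ValuationSubring.valuation_le_one_iff, map_inv₀,
    hunit, inv_one]
  exact ⟨le_rfl, le_rfl⟩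
end

section
/- Let (L', u') ⊇ (L, u) be a finite normal extension of valued fields with automorphism group H = Aut_L(L'). Assume that for every a ∈ (L')^* and every h ∈ H one has h(a)/a ∈ 1 + 𝔪_{u'}. If the residue field k_u has positive characteristic p, then H is a p-group; if k_u has characteristic 0, then H is trivial. -/
/-- Let `(L', u') ⊇ (L, u)` be a finite normal extension of valued fields with automorphism
group `H = Aut_L(L')`, and assume `h(a)/a ∈ 1 + 𝔪_{u'}` (i.e. `u'.valuation (h a / a - 1) < 1`)
for every `a ∈ (L')^*` and `h ∈ H`. If the residue field `k_u` has characteristic `p > 0`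
then `H` is a `p`-group, and if `k_u` has characteristic `0` then `H` is trivial. -/
theorem stmt_14 {L L' : Type*} [Field L] [Field L'] [Algebra L L'] [Normal L L']
    [FiniteDimensional L L'] (u : ValuationSubring L) (u' : ValuationSubring L')
    (h : u'.comap (algebraMap L L') = u)
    (H : ∀ a : L', a ≠ 0 → ∀ g : L' ≃ₐ[L] L', u'.valuation (g a / a - 1) < 1) :
    (∀ p : ℕ, p.Prime → ringChar (IsLocalRing.ResidueField u) = p →
      IsPGroup p (L' ≃ₐ[L] L')) ∧
    (ringChar (IsLocalRing.ResidueField u) = 0 → ∀ g : L' ≃ₐ[L] L', g = 1) := by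
  -- Key: if g ≠ 1 then the order of g is zero in the residue field.
  have key : ∀ g : L' ≃ₐ[L] L', g ≠ 1 →
      ((orderOf g : ℕ) : IsLocalRing.ResidueField u) = 0 := by
    intro g hg
    obtain ⟨a, ha⟩ : ∃ a : L', g a ≠ a := by
      by_contra hcon
      push_neg at hcon
      exact hg (AlgEquiv.ext fun a => hcon a)
    set n := orderOf g with hn
    set c := g a - a with hc
    have hc0 : c ≠ 0 := sub_ne_zero.mpr ha
    have hsum : ∑ i ∈ Finset.range n, (g ^ i) c = 0 := by
      have hterm : ∀ i, (g ^ i) c = (g ^ (i + 1)) a - (g ^ i) a := by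
        intro i
        rw [hc, map_sub, pow_succ, AlgEquiv.mul_apply]
      rw [Finset.sum_congr rfl fun i _ => hterm i, Finset.sum_range_sub (fun i => (g ^ i) a)]
      simp [hn, pow_orderOf_eq_one g]
    have hsum2 : ∑ i ∈ Finset.range n, ((g ^ i) c / c) = 0 := by
      rw [← Finset.sum_div, hsum, zero_div]
    have hnpos : 0 < n := Nat.pos_of_ne_zero ((orderOf_pos _).ne')
    have hNL' : ((n : ℕ) : L') = -∑ i ∈ Finset.range n, ((g ^ i) c / c - 1) := by
      rw [Finset.sum_sub_distrib, hsum2, Finset.sum_const, Finset.card_range]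
      ring
    have hvlt : u'.valuation ((n : ℕ) : L') < 1 := by
      rw [hNL', Valuation.map_neg]
      exact Valuation.map_sum_lt _ one_ne_zero fun i _ => H c hc0 (g ^ i)
    -- transfer to the residue field of u
    have hmem : (n : ↥u) ∈ IsLocalRing.maximalIdeal u := by
      rw [IsLocalRing.mem_maximalIdeal, mem_nonunits_iff]
      intro hunit
      obtain ⟨y, hy⟩ : ∃ y : ↥u, (n : ↥u) * y = 1 := hunit.exists_right_inv
      have hy' : (n : L) * (y : L) = 1 := by exact_mod_cast congrArg (Subtype.val) hy
      have hy'' : ((n : ℕ) : L') * algebraMap L L' (y : L) = 1 := by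
        have := congrArg (algebraMap L L') hy'
        rw [map_mul, map_one, map_natCast] at this
        exact this
      have hymem : algebraMap L L' (y : L) ∈ u' := by
        have : (y : L) ∈ u'.comap (algebraMap L L') := by rw [h]; exact y.2
        exact this
      have hle : u'.valuation (algebraMap L L' (y : L)) ≤ 1 :=
        (u'.valuation_le_one_iff _).mpr hymem
      have : (1 : u'.ValueGroup) = u'.valuation ((n : ℕ) : L') *
          u'.valuation (algebraMap L L' (y : L)) := by
        rw [← Valuation.map_mul, hy'', Valuation.map_one]
      have hlt : u'.valuation ((n : ℕ) : L') *
          u'.valuation (algebraMap L L' (y : L)) < 1 := by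
        calc u'.valuation ((n : ℕ) : L') * u'.valuation (algebraMap L L' (y : L))
            ≤ u'.valuation ((n : ℕ) : L') * 1 := mul_le_mul_right hle _
          _ = u'.valuation ((n : ℕ) : L') := mul_one _
          _ < 1 := hvlt
      rw [← this] at hlt
      exact lt_irrefl _ hlt
    have : ((n : ℕ) : IsLocalRing.ResidueField u) = IsLocalRing.residue (↥u) (n : ↥u) := by
      rw [map_natCast]
    rw [this]
    exact (IsLocalRing.residue_eq_zero_iff _).mpr hmem
  constructor
  · intro p hp hchar
    haveI : Fact p.Prime := ⟨hp⟩
    rw [IsPGroup.iff_orderOf]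
    intro g
    rcases eq_or_ne g 1 with rfl | hg
    · exact ⟨0, by simp⟩
    have hn0 : orderOf g ≠ 0 := (orderOf_pos _).ne'
    have hq : ∀ {d : ℕ}, d.Prime → d ∣ orderOf g → d = p := by
      intro d hd hdvd
      set x := g ^ (orderOf g / d) with hx
      have hox : orderOf x = d := orderOf_pow_orderOf_div hn0 hdvd
      have hx1 : x ≠ 1 := by
        intro hx1
        rw [hx1, orderOf_one] at hox
        exact hd.one_lt.ne' hox.symm
      have := key x hx1
      rw [hox] at this
      have hdvd' : ringChar (IsLocalRing.ResidueField u) ∣ d := by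
        rwa [← CharP.cast_eq_zero_iff (IsLocalRing.ResidueField u)
          (ringChar (IsLocalRing.ResidueField u)) d]
      rw [hchar] at hdvd'
      exact ((Nat.prime_dvd_prime_iff_eq hp hd).mp hdvd').symm
    exact ⟨_, Nat.eq_prime_pow_of_unique_prime_dvd hn0 hq⟩
  · intro h0 g
    by_contra hg
    have := key g hg
    have hdvd : ringChar (IsLocalRing.ResidueField u) ∣ orderOf g := by
      rwa [← CharP.cast_eq_zero_iff (IsLocalRing.ResidueField u)
        (ringChar (IsLocalRing.ResidueField u)) (orderOf g)]
    rw [h0] at hdvd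
    exact (orderOf_pos g).ne' (zero_dvd_iff.mp hdvd)
end
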